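/- Let ℓ be a prime number, n ≥ 1, and let G be a profinite group such that every open normal subgroup of G has finite index not divisible by ℓ. Let ρ : G → GL_n(ℤ_ℓ) be a continuous group homomorphism. Then the composite π ∘ ρ : G → GL_n(𝔽_ℓ) has the same kernel as ρ, the image ρ(G) injects into GL_n(𝔽_ℓ), and in particular ρ(G) is a finite group of cardinality at most |GL_n(𝔽_ℓ)|. -/

import Mathlib

/-!
Let `Γ(k)` be the kernel of reduction `GL_n(ℤ_ℓ) → GL_n(ℤ/ℓ^k)`. If `x = 1 + z ∈ Γ(k)` with
`k ≥ 1`, then `x^m ≡ 1 + m z (mod ℓ^(k+1))` because `z² ≡ 0 (mod ℓ^(2k))`. Now if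
`x = ρ g ∈ Γ(k)`, the preimage of `Γ(k+1)` under `ρ` is open and normal, so its index `m` is
prime to `ℓ` and `x^m ∈ Γ(k+1)`; as `m` is a unit of `ℤ_ℓ`, this forces `z ≡ 0 (mod ℓ^(k+1))`.
By induction `ρ g ∈ ⋂ₖ Γ(k) = 1` whenever `ρ g ∈ Γ(1)`.
-/

open Matrix

namespace Ideal

theorem one_add_pow_sub_one_sub_nsmul_mem {A : Type*} [Ring A] {J : Ideal A} {z : A}
    (hz : z * z ∈ J) (m : ℕ) : (1 + z) ^ m - 1 - m • z ∈ J := by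
  induction m with
  | zero => simp
  | succ m ih =>
    have key : (1 + z) ^ (m + 1) - 1 - (m + 1) • z
        = (1 + z) * ((1 + z) ^ m - 1 - m • z) + m • (z * z) := by
      simp only [pow_succ', mul_sub, mul_one, mul_smul_comm, add_mul, one_mul, smul_add,
        succ_nsmul]
      abel
    rw [key]
    exact add_mem (J.mul_mem_left _ ih) (J.nsmul_mem hz m)

theorem mem_of_one_add_pow_sub_one_mem {A : Type*} [Ring A] {J : Ideal A} {z : A}
    (hz : z * z ∈ J) {m : ℕ} (hm : IsUnit (m : A)) (h : (1 + z) ^ m - 1 ∈ J) : z ∈ J := by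
  have hmz : (m : A) * z ∈ J := by
    simpa [nsmul_eq_mul] using J.sub_mem h (one_add_pow_sub_one_sub_nsmul_mem hz m)
  simpa [← mul_assoc] using J.mul_mem_left (↑hm.unit⁻¹) hmz

theorem mul_mem_matrix_mul {R : Type*} [CommSemiring R] {n : Type*} [Fintype n] [DecidableEq n]
    {I J : Ideal R} {M N : Matrix n n R} (hM : M ∈ I.matrix n) (hN : N ∈ J.matrix n) :
    M * N ∈ (I * J).matrix n :=
  fun i j => Ideal.sum_mem _ fun k _ => mul_mem_mul (hM i k) (hN k j)

end Ideal

theorem MonoidHom.injOn_range_of_ker_comp_le {G H K : Type*} [Group G] [Group H] [Group K]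
    {ρ : G →* H} {π : H →* K} (h : (π.comp ρ).ker ≤ ρ.ker) : Set.InjOn π (Set.range ρ) := by
  rintro _ ⟨a, rfl⟩ _ ⟨b, rfl⟩ hab
  rw [← div_eq_one, ← map_div]
  exact h (by simp [hab])

namespace Matrix.GeneralLinearGroup

theorem map_eq_one_iff {n R S : Type*} [Fintype n] [DecidableEq n] [CommRing R] [CommRing S]
    (f : R →+* S) (x : GL n R) :
    map f x = 1 ↔ (x : Matrix n n R) - 1 ∈ (RingHom.ker f).matrix n := by
  rw [Units.ext_iff, Units.val_one, ← (RingHom.mapMatrix f).map_one, Ideal.mem_matrix,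
    ← Matrix.ext_iff]
  simp only [GeneralLinearGroup.map_apply, RingHom.mapMatrix_apply, map_apply, RingHom.mem_ker,
    sub_apply, map_sub, sub_eq_zero]

end Matrix.GeneralLinearGroup

namespace PadicInt

variable {p : ℕ} [Fact p.Prime] {n : Type*} [Fintype n] [DecidableEq n]

variable (p n) in
noncomputable def congruenceSubgroup (k : ℕ) : Subgroup (GL n ℤ_[p]) :=
  (GeneralLinearGroup.map (toZModPow k)).ker

instance normal_congruenceSubgroup (k : ℕ) : (congruenceSubgroup p n k).Normal :=
  MonoidHom.normal_ker _

theorem mem_congruenceSubgroup_iff {k : ℕ} {x : GL n ℤ_[p]} :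
    x ∈ congruenceSubgroup p n k ↔
      (x : Matrix n n ℤ_[p]) - 1 ∈ (Ideal.span {(p : ℤ_[p])} ^ k).matrix n := by
  rw [congruenceSubgroup, MonoidHom.mem_ker, GeneralLinearGroup.map_eq_one_iff, ker_toZModPow,
    Ideal.span_singleton_pow]

theorem map_toZMod_eq_one_iff {x : GL n ℤ_[p]} :
    GeneralLinearGroup.map toZMod x = 1 ↔ x ∈ congruenceSubgroup p n 1 := by
  rw [GeneralLinearGroup.map_eq_one_iff, ker_toZMod, maximalIdeal_eq_span_p,
    mem_congruenceSubgroup_iff, pow_one]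

theorem isOpen_span_p_pow (k : ℕ) :
    IsOpen ((Ideal.span {(p : ℤ_[p])} ^ k : Ideal ℤ_[p]) : Set ℤ_[p]) := by
  have hball : ((Ideal.span {(p : ℤ_[p])} ^ k : Ideal ℤ_[p]) : Set ℤ_[p])
      = Metric.closedBall 0 ((p : ℝ) ^ (-(k : ℤ))) := by
    ext x
    simp [Ideal.span_singleton_pow, ← norm_le_pow_iff_mem_span_pow]
  rw [hball]
  exact IsUltrametricDist.isOpen_closedBall _ (by have := (Fact.out : p.Prime).pos; positivity)

theorem isOpen_congruenceSubgroup (k : ℕ) :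
    IsOpen (congruenceSubgroup p n k : Set (GL n ℤ_[p])) := by
  have hset : (congruenceSubgroup p n k : Set (GL n ℤ_[p]))
      = ⋂ i, ⋂ j, (fun x : GL n ℤ_[p] => ((x : Matrix n n ℤ_[p]) - 1) i j) ⁻¹'
          (Ideal.span {(p : ℤ_[p])} ^ k : Ideal ℤ_[p]) := by
    ext x
    simp [mem_congruenceSubgroup_iff, Ideal.mem_matrix]
  rw [hset]
  refine isOpen_iInter_of_finite fun i => isOpen_iInter_of_finite fun j => ?_
  exact (isOpen_span_p_pow k).preimage
    ((Units.continuous_val.sub continuous_const).matrix_elem i j)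

theorem eq_one_of_forall_mem_congruenceSubgroup {x : GL n ℤ_[p]}
    (hx : ∀ k, x ∈ congruenceSubgroup p n (k + 1)) : x = 1 := by
  ext i j
  refine ext_of_toZModPow.mp fun k => ?_
  rcases k with _ | k
  · exact Subsingleton.elim (α := ZMod 1) _ _
  · have := congrArg (fun y : GL n (ZMod (p ^ (k + 1))) => y.val i j)
      (MonoidHom.mem_ker.mp (hx k))
    simpa [GeneralLinearGroup.map_apply, Matrix.one_apply, apply_ite] using this

theorem isUnit_natCast_of_not_dvd {m : ℕ} (hm : ¬ p ∣ m) : IsUnit (m : ℤ_[p]) :=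
  isUnit_iff.mpr <| norm_natCast_eq_one_iff.mpr <| (Nat.Prime.coprime_iff_not_dvd Fact.out).mpr hm

theorem mem_congruenceSubgroup_succ_of_pow_mem {k m : ℕ} (hk : 1 ≤ k) (hm : ¬ p ∣ m)
    {x : GL n ℤ_[p]} (hx : x ∈ congruenceSubgroup p n k)
    (hxm : x ^ m ∈ congruenceSubgroup p n (k + 1)) : x ∈ congruenceSubgroup p n (k + 1) := by
  rw [mem_congruenceSubgroup_iff] at hx hxm ⊢
  set z := (x : Matrix n n ℤ_[p]) - 1
  have hx1 : (x : Matrix n n ℤ_[p]) = 1 + z := by simp [z]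
  refine Ideal.mem_of_one_add_pow_sub_one_mem (m := m) ?_ ?_ ?_
  · refine Ideal.matrix_monotone n ?_ (Ideal.mul_mem_matrix_mul hx hx)
    rw [← pow_add]
    exact Ideal.pow_le_pow_right (by omega)
  · simpa using (isUnit_natCast_of_not_dvd hm).map (algebraMap ℤ_[p] (Matrix n n ℤ_[p]))
  · simpa [hx1] using hxm

theorem eq_one_of_mem_congruenceSubgroup_one {G : Type*} [Group G] [TopologicalSpace G]
    (hG : ∀ N : Subgroup G, N.Normal → IsOpen (N : Set G) → ¬ p ∣ N.index)
    {ρ : G →* GL n ℤ_[p]} (hρ : Continuous ρ) {g : G}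
    (hg : ρ g ∈ congruenceSubgroup p n 1) : ρ g = 1 := by
  have step : ∀ k, 1 ≤ k → ρ g ∈ congruenceSubgroup p n k →
      ρ g ∈ congruenceSubgroup p n (k + 1) := by
    intro k hk hgk
    let N := (congruenceSubgroup p n (k + 1)).comap ρ
    have hN : ¬ p ∣ N.index :=
      hG N inferInstance ((isOpen_congruenceSubgroup _).preimage hρ)
    exact mem_congruenceSubgroup_succ_of_pow_mem hk hN hgk
      (by simpa [N] using N.pow_index_mem g)
  refine eq_one_of_forall_mem_congruenceSubgroup fun k => ?_
  induction k with
  | zero => exact hg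
  | succ k ih => exact step _ (by omega) ih

end PadicInt

theorem image_injects_into_GL_n_F_ell_general
    (ℓ : ℕ) [Fact ℓ.Prime] (n : ℕ)
    (G : Type*) [Group G] [TopologicalSpace G]
    (hG : ∀ N : Subgroup G, N.Normal → IsOpen (N : Set G) →
      N.FiniteIndex ∧ ¬ (ℓ ∣ N.index))
    (ρ : G →* Matrix.GeneralLinearGroup (Fin n) ℤ_[ℓ])
    (hρ : Continuous ρ)
    (π : Matrix.GeneralLinearGroup (Fin n) ℤ_[ℓ] →*
          Matrix.GeneralLinearGroup (Fin n) (ZMod ℓ))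
    (hπ : π = Units.map (RingHom.mapMatrix (PadicInt.toZMod (p := ℓ))).toMonoidHom) :
    (π.comp ρ).ker = ρ.ker ∧
    Set.InjOn π (Set.range ρ) ∧
    (Set.range ρ).Finite ∧
    Nat.card (Set.range ρ) ≤
      Nat.card (Matrix.GeneralLinearGroup (Fin n) (ZMod ℓ)) := by
  have hker : (π.comp ρ).ker = ρ.ker := by
    refine le_antisymm (fun g hg => ?_) fun g hg => by simp_all
    subst hπ
    exact PadicInt.eq_one_of_mem_congruenceSubgroup_one (fun N hN hNo => (hG N hN hNo).2) hρ
      (PadicInt.map_toZMod_eq_one_iff.mp hg)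
  have hinj : Set.InjOn π (Set.range ρ) := MonoidHom.injOn_range_of_ker_comp_le hker.le
  exact ⟨hker, hinj, Set.Finite.of_finite_image (Set.toFinite _) hinj,
    Nat.card_le_card_of_injective _ (Set.injOn_iff_injective.mp hinj)⟩

/-- With G profinite all of whose open normal subgroups have finite index
prime to ℓ, and ρ : G → GL_n(ℤ_ℓ) continuous, the composite with the reduction map
π : GL_n(ℤ_ℓ) → GL_n(𝔽_ℓ) has the same kernel as ρ, π is injective on the image of ρ,
and the image of ρ is finite of cardinality at most |GL_n(𝔽_ℓ)|. -/
theorem image_injects_into_GL_n_F_ell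
    (ℓ : ℕ) [Fact ℓ.Prime] (n : ℕ) (hn : 1 ≤ n)
    (G : Type*) [Group G] [TopologicalSpace G] [IsTopologicalGroup G]
    [CompactSpace G] [T2Space G] [TotallyDisconnectedSpace G]
    (hG : ∀ N : Subgroup G, N.Normal → IsOpen (N : Set G) →
      N.FiniteIndex ∧ ¬ (ℓ ∣ N.index))
    (ρ : G →* Matrix.GeneralLinearGroup (Fin n) ℤ_[ℓ])
    (hρ : Continuous ρ)
    (π : Matrix.GeneralLinearGroup (Fin n) ℤ_[ℓ] →*
          Matrix.GeneralLinearGroup (Fin n) (ZMod ℓ))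
    (hπ : π = Units.map (RingHom.mapMatrix (PadicInt.toZMod (p := ℓ))).toMonoidHom) :
    (π.comp ρ).ker = ρ.ker ∧
    Set.InjOn π (Set.range ρ) ∧
    (Set.range ρ).Finite ∧
    Nat.card (Set.range ρ) ≤
      Nat.card (Matrix.GeneralLinearGroup (Fin n) (ZMod ℓ)) :=
  image_injects_into_GL_n_F_ell_general ℓ n G hG ρ hρ π hπ
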